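/- arXiv:2411.04761 — 2 statements merged into one kernel-verified Lean document; each statement's English description precedes it below -/
import Mathlib

section
/- Let f* and f' be unit vectors in ℝ^d with f'·f* = cos(α) for some α ∈ (0, π/2). There is no bound of the form skew(D_{f'}) ≥ c(α)·skew(D_{f*}) with c(α) > 0 depending only on α and d: for every ε > 0 and every α ∈ (0, π/2), there exists a finite dataset D ⊂ ℝ² and unit vectors f*, f' at angle α such that skew(D_{f*}) > 0 but skew(D_{f'})/skew(D_{f*}) < ε. -/
open Matrix

/-- Mean of a finite family of reals. -/
noncomputable def meanVal {n : ℕ} (v : Fin n → ℝ) : ℝ := (∑ i, v i) / n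

/-- (Lower) median of a finite family of reals. -/
noncomputable def medVal {n : ℕ} (v : Fin n → ℝ) : ℝ :=
  sInf {x : ℝ | (n : ℝ) ≤ 2 * ((Finset.univ.filter fun i => v i ≤ x).card : ℝ)}

/-- Standard deviation of a finite family of reals. -/
noncomputable def sdVal {n : ℕ} (v : Fin n → ℝ) : ℝ :=
  Real.sqrt ((∑ i, (v i - meanVal v) ^ 2) / n)

/-- Pearson's median skewness of a finite family of reals. -/
noncomputable def skewVal {n : ℕ} (v : Fin n → ℝ) : ℝ :=
  3 * (meanVal v - medVal v) / sdVal v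

lemma med_zero3 : medVal (fun _ : Fin 3 => (0:ℝ)) = 0 := by
  unfold medVal
  have hset : {x : ℝ | ((3:ℕ) : ℝ) ≤ 2 * ((Finset.univ.filter fun _ : Fin 3 => (0:ℝ) ≤ x).card : ℝ)}
      = Set.Ici 0 := by
    ext x
    simp only [Set.mem_setOf_eq, Set.mem_Ici]
    by_cases h : (0:ℝ) ≤ x
    · simp [Finset.filter_true_of_mem (fun i _ => h), h]
    · simp [Finset.filter_false_of_mem (fun i _ => h), h]
  rw [hset, csInf_Ici]

lemma skew_zero3 : skewVal (fun _ : Fin 3 => (0:ℝ)) = 0 := by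
  unfold skewVal
  rw [med_zero3]
  simp [meanVal]

lemma med_001 : medVal (![0,0,1] : Fin 3 → ℝ) = 0 := by
  unfold medVal
  have hset : {x : ℝ | ((3:ℕ) : ℝ) ≤ 2 * ((Finset.univ.filter fun i : Fin 3 => (![0,0,1] : Fin 3 → ℝ) i ≤ x).card : ℝ)}
      = Set.Ici 0 := by
    ext x
    simp only [Set.mem_setOf_eq, Set.mem_Ici]
    rw [Finset.card_filter]
    rw [Fin.sum_univ_three]
    simp only [Matrix.cons_val_zero, Matrix.cons_val_one, Matrix.head_cons, Matrix.cons_val_two, Matrix.tail_cons]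
    constructor
    · intro h
      by_contra hx
      push_neg at hx
      have h0 : ¬ ((0:ℝ) ≤ x) := not_le.mpr hx
      have h1 : ¬ ((1:ℝ) ≤ x) := by intro hc; linarith
      simp [h0, h1] at h
      norm_num at h
    · intro h
      by_cases h1 : (1:ℝ) ≤ x
      · simp [h, h1]
      · simp [h, h1]; norm_num
  rw [hset, csInf_Ici]

lemma skew_001 : 0 < skewVal (![0,0,1] : Fin 3 → ℝ) := by
  unfold skewVal
  rw [med_001]
  have hmean : meanVal (![0,0,1] : Fin 3 → ℝ) = 1/3 := by
    unfold meanVal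
    rw [Fin.sum_univ_three]
    norm_num
    rfl
  have hsd : 0 < sdVal (![0,0,1] : Fin 3 → ℝ) := by
    unfold sdVal
    apply Real.sqrt_pos.mpr
    rw [Fin.sum_univ_three, hmean]
    norm_num
    positivity
  rw [hmean]
  positivity

/-- Negative result: there is no dataset-independent bound `skew(D_{f'}) ≥ c(α) · skew(D_{f*})`
for unit vectors at angle `α`: for every `ε > 0` and `α ∈ (0, π/2)` there is a finite
dataset `D ⊂ ℝ²` and unit vectors `f*, f'` with `f'·f* = cos α`, `skew(D_{f*}) > 0`,
yet `skew(D_{f'})/skew(D_{f*}) < ε`. -/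
theorem no_angle_only_skew_bound :
    ∀ ε > (0 : ℝ), ∀ α ∈ Set.Ioo (0 : ℝ) (Real.pi / 2),
      ∃ (n : ℕ) (t : Fin n → Fin 2 → ℝ) (fstar f' : Fin 2 → ℝ),
        fstar ⬝ᵥ fstar = 1 ∧ f' ⬝ᵥ f' = 1 ∧ f' ⬝ᵥ fstar = Real.cos α ∧
        0 < skewVal (fun i => t i ⬝ᵥ fstar) ∧
        skewVal (fun i => t i ⬝ᵥ f') / skewVal (fun i => t i ⬝ᵥ fstar) < ε := by
  intro ε hε α hα
  obtain ⟨hα0, hα2⟩ := hα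
  have hs : 0 < Real.sin α := Real.sin_pos_of_pos_of_lt_pi hα0 (by linarith [Real.pi_pos])
  set c := Real.cos α
  set s := Real.sin α
  refine ⟨3, ![![0,0],![0,0],![1, -c/s]], ![1,0], ![c,s], ?_, ?_, ?_, ?_, ?_⟩
  · simp [dotProduct, Fin.sum_univ_two]
  · simp [dotProduct, Fin.sum_univ_two]
    rw [← Real.sin_sq_add_cos_sq α]; ring
  · simp [dotProduct, Fin.sum_univ_two]
  · have he : (fun i : Fin 3 => (![![0,0],![0,0],![1, -c/s]] : Fin 3 → Fin 2 → ℝ) i ⬝ᵥ ![1,0]) = ![0,0,1] := by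
      funext i
      fin_cases i <;> simp [dotProduct, Fin.sum_univ_two]
    rw [he]; exact skew_001
  · have he : (fun i : Fin 3 => (![![0,0],![0,0],![1, -c/s]] : Fin 3 → Fin 2 → ℝ) i ⬝ᵥ ![c,s]) = (fun _ => 0) := by
      funext i
      fin_cases i <;> simp [dotProduct, Fin.sum_univ_two]
      field_simp
      ring
    rw [he, skew_zero3]
    have he2 : (fun i : Fin 3 => (![![0,0],![0,0],![1, -c/s]] : Fin 3 → Fin 2 → ℝ) i ⬝ᵥ ![1,0]) = ![0,0,1] := by
      funext i
      fin_cases i <;> simp [dotProduct, Fin.sum_univ_two]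
    rw [he2]
    rw [zero_div]
    exact hε
end

section
/- Let q₁,...,q_n ∈ ℝ^d sum to zero (Σᵢ qᵢ = 0), with n ≥ 2, and let QQᵀ = Σᵢ qᵢqᵢᵀ be positive definite. Then for any fixed index m, the maximum squared normalized skewness max_{f≠0} (q_m·f)²/(fᵀQQᵀf) = q_mᵀ(QQᵀ)⁻¹q_m < 1. -/
open Matrix

/-- Cauchy–Schwarz for a positive semidefinite quadratic form coming from a
symmetric real matrix. -/
lemma cs_aux {d : ℕ} (M : Matrix (Fin d) (Fin d) ℝ) (hsym : Mᵀ = M)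
    (hps : ∀ x : Fin d → ℝ, 0 ≤ x ⬝ᵥ M.mulVec x) (x y : Fin d → ℝ) :
    (x ⬝ᵥ M.mulVec y) ^ 2 ≤ (x ⬝ᵥ M.mulVec x) * (y ⬝ᵥ M.mulVec y) := by
  have hsymm : ∀ u v : Fin d → ℝ, u ⬝ᵥ M.mulVec v = v ⬝ᵥ M.mulVec u := by
    intro u v
    rw [Matrix.dotProduct_mulVec, ← Matrix.mulVec_transpose, hsym, dotProduct_comm]
  have key : ∀ t : ℝ,
      0 ≤ (y ⬝ᵥ M.mulVec y) * (t * t) + (2 * (x ⬝ᵥ M.mulVec y)) * t + x ⬝ᵥ M.mulVec x := by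
    intro t
    have h0 := hps (x + t • y)
    have hexp : (x + t • y) ⬝ᵥ M.mulVec (x + t • y)
        = (y ⬝ᵥ M.mulVec y) * (t * t) + (2 * (x ⬝ᵥ M.mulVec y)) * t + x ⬝ᵥ M.mulVec x := by
      simp only [Matrix.mulVec_add, Matrix.mulVec_smul, add_dotProduct,
        dotProduct_add, smul_dotProduct, dotProduct_smul,
        smul_eq_mul, hsymm y x]
      ring
    linarith [hexp ▸ h0]
  have hd := discrim_le_zero key
  rw [discrim] at hd
  nlinarith [hd]

/-- For mean-shifted points `q₁, …, q_n` (summing to zero, `n ≥ 2`) with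
`Q Qᵀ = Σᵢ qᵢqᵢᵀ` positive definite, the maximum over nonzero `f` of the squared
normalized skewness `(q_m·f)²/(fᵀ Q Qᵀ f)` equals `q_mᵀ (Q Qᵀ)⁻¹ q_m`, and this value
is strictly less than `1`. -/
theorem max_normalized_skew_lt_one (d n : ℕ) (hd : 0 < d) (hn : 2 ≤ n)
    (q : Fin n → Fin d → ℝ) (hsum : ∑ i, q i = 0)
    (Q : Matrix (Fin d) (Fin n) ℝ) (hQ : Q = Matrix.of fun a i => q i a)
    (hpd : (Q * Qᵀ).PosDef) (m : Fin n) :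
    IsGreatest
        {r : ℝ | ∃ f : Fin d → ℝ, f ≠ 0 ∧
          r = (q m ⬝ᵥ f) ^ 2 / (f ⬝ᵥ (Q * Qᵀ).mulVec f)}
        (q m ⬝ᵥ (Q * Qᵀ)⁻¹.mulVec (q m)) ∧
      q m ⬝ᵥ (Q * Qᵀ)⁻¹.mulVec (q m) < 1 := by
  set A := Q * Qᵀ with hA
  have hAsym : Aᵀ = A := by
    rw [hA, Matrix.transpose_mul, Matrix.transpose_transpose]
  -- positivity of the quadratic form
  have hpos : ∀ x : Fin d → ℝ, x ≠ 0 → 0 < x ⬝ᵥ A.mulVec x := by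
    intro x hx
    have := hpd.dotProduct_mulVec_pos hx
    simpa using this
  have hnonneg : ∀ x : Fin d → ℝ, 0 ≤ x ⬝ᵥ A.mulVec x := by
    intro x
    by_cases hx : x = 0
    · simp [hx]
    · exact (hpos x hx).le
  -- invertibility
  have hunit : IsUnit A := hpd.isUnit
  have hAinv : A * A⁻¹ = 1 := Matrix.mul_nonsing_inv _ ((Matrix.isUnit_iff_isUnit_det _).1 hunit)
  set v : Fin d → ℝ := q m with hv
  set w : Fin d → ℝ := A⁻¹.mulVec v with hw
  have hAw : A.mulVec w = v := by
    rw [hw, Matrix.mulVec_mulVec, hAinv, Matrix.one_mulVec]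
  set s : ℝ := v ⬝ᵥ w with hs
  -- s ≥ 0 via posdef of A⁻¹
  have hinvpd : (A⁻¹).PosDef := hpd.inv
  have hsnonneg : 0 ≤ s := by
    by_cases hv0 : v = 0
    · simp [hs, hv0]
    · have := hinvpd.dotProduct_mulVec_pos hv0
      have : (0 : ℝ) < v ⬝ᵥ A⁻¹.mulVec v := by simpa using this
      rw [hs, hw]; exact this.le
  have hspos_of_ne : v ≠ 0 → 0 < s := by
    intro hv0
    have := hinvpd.dotProduct_mulVec_pos hv0
    have : (0 : ℝ) < v ⬝ᵥ A⁻¹.mulVec v := by simpa using this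
    rw [hs, hw]; exact this
  -- w ⬝ᵥ A.mulVec w = s
  have hwAw : w ⬝ᵥ A.mulVec w = s := by
    rw [hAw, dotProduct_comm]
  -- quadratic form as a sum of squares
  have hquad : ∀ x : Fin d → ℝ, x ⬝ᵥ A.mulVec x = ∑ i, (q i ⬝ᵥ x) ^ 2 := by
    intro x
    have h1 : A.mulVec x = Q.mulVec (Qᵀ.mulVec x) := by
      rw [hA, ← Matrix.mulVec_mulVec]
    rw [h1, Matrix.dotProduct_mulVec, ← Matrix.mulVec_transpose]
    have h2 : ∀ i, Qᵀ.mulVec x i = q i ⬝ᵥ x := by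
      intro i
      simp [Matrix.mulVec, dotProduct, hQ, mul_comm]
    rw [dotProduct]
    refine Finset.sum_congr rfl fun i _ => ?_
    rw [h2 i, sq]
  -- Cauchy–Schwarz upper bound
  have hub : ∀ f : Fin d → ℝ, f ≠ 0 → (v ⬝ᵥ f) ^ 2 / (f ⬝ᵥ A.mulVec f) ≤ s := by
    intro f hf
    have hfAf : 0 < f ⬝ᵥ A.mulVec f := hpos f hf
    rw [div_le_iff₀ hfAf]
    have hcs := cs_aux A hAsym hnonneg w f
    have hwf : w ⬝ᵥ A.mulVec f = v ⬝ᵥ f := by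
      rw [Matrix.dotProduct_mulVec, ← Matrix.mulVec_transpose, hAsym, hAw]
    rw [hwf, hwAw] at hcs
    linarith
  -- membership
  have hmem : ∃ f : Fin d → ℝ, f ≠ 0 ∧ s = (v ⬝ᵥ f) ^ 2 / (f ⬝ᵥ A.mulVec f) := by
    by_cases hv0 : v = 0
    · refine ⟨fun _ => 1, ?_, ?_⟩
      · intro h
        have : (fun _ : Fin d => (1 : ℝ)) ⟨0, hd⟩ = 0 := by rw [h]; rfl
        simpa using this
      · simp [hs, hv0]
    · have hspos := hspos_of_ne hv0
      have hw0 : w ≠ 0 := by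
        intro h
        rw [h, Matrix.mulVec_zero] at hAw
        exact hv0 hAw.symm
      refine ⟨w, hw0, ?_⟩
      rw [hwAw, hs, pow_two, mul_div_assoc, div_self hspos.ne', mul_one]
  -- s ≤ 1 and s ≠ 1
  have hsum_sq : ∑ i, (q i ⬝ᵥ w) ^ 2 = s := by rw [← hquad w, hwAw]
  have hrest : ∑ i ∈ Finset.univ.erase m, (q i ⬝ᵥ w) ^ 2 = s - s ^ 2 := by
    have h3 : (q m ⬝ᵥ w) ^ 2 + ∑ i ∈ Finset.univ.erase m, (q i ⬝ᵥ w) ^ 2 = s := by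
      rw [← hsum_sq]
      exact Finset.add_sum_erase Finset.univ (fun i => (q i ⬝ᵥ w) ^ 2) (Finset.mem_univ m)
    have hm : (q m ⬝ᵥ w) ^ 2 = s ^ 2 := by rw [← hv, ← hs]
    linarith [h3, hm]
  have hrest_nonneg : 0 ≤ s - s ^ 2 := by
    rw [← hrest]
    exact Finset.sum_nonneg fun i _ => sq_nonneg _
  have hle1 : s ≤ 1 := by nlinarith
  have hne1 : s ≠ 1 := by
    intro h1
    have hrest0 : ∑ i ∈ Finset.univ.erase m, (q i ⬝ᵥ w) ^ 2 = 0 := by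
      rw [hrest, h1]; ring
    have hzero : ∀ i ∈ Finset.univ.erase m, (q i ⬝ᵥ w) ^ 2 = 0 :=
      (Finset.sum_eq_zero_iff_of_nonneg fun i _ => sq_nonneg _).1 hrest0
    have hvw : v ⬝ᵥ w = -∑ i ∈ Finset.univ.erase m, (q i ⬝ᵥ w) := by
      have h2 : ∑ i, (q i ⬝ᵥ w) = 0 := by
        have heq : ∑ i, (q i ⬝ᵥ w) = (∑ i, q i) ⬝ᵥ w := by
          simp only [dotProduct, Finset.sum_apply, Finset.sum_mul]
          rw [Finset.sum_comm]
        rw [heq, hsum, zero_dotProduct]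
      have h3 : (q m ⬝ᵥ w) + ∑ i ∈ Finset.univ.erase m, (q i ⬝ᵥ w) = 0 := by
        rw [← h2]
        exact Finset.add_sum_erase Finset.univ (fun i => q i ⬝ᵥ w) (Finset.mem_univ m)
      rw [hv]; linarith
    have : v ⬝ᵥ w = 0 := by
      rw [hvw]
      have : ∀ i ∈ Finset.univ.erase m, (q i ⬝ᵥ w) = 0 := by
        intro i hi
        exact pow_eq_zero_iff two_ne_zero |>.mp (hzero i hi)
      rw [Finset.sum_eq_zero this]; ring
    rw [← hs] at this
    rw [this] at h1
    norm_num at h1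
  have hlt1 : s < 1 := lt_of_le_of_ne hle1 hne1
  constructor
  · constructor
    · obtain ⟨f, hf, heq⟩ := hmem
      exact ⟨f, hf, heq⟩
    · rintro r ⟨f, hf, rfl⟩
      exact hub f hf
  · exact hlt1
end
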